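/- The set C_n^i (for n > 0) of asymptotic classes of geodesic rays from the origin in DL_2(q) that bottom out in T_i after descending exactly n edges is open in the visual boundary ∂DL_2(q), where the topology is the quotient of the compact-open topology on geodesic rays from the origin. -/

import Mathlib

/-- A vertex of the (q+1)-regular tree with a distinguished end, in the
horocyclic model: a height `k ∈ ℤ` together with a finitely supported
labelling of the levels strictly below `k`. -/
structure TreeVert (q : ℕ) where
  height : ℤ
  labels : ℤ → ℕ
  labels_lt : ∀ n, labels n = 0 ∨ labels n < q
  supp_below : ∀ n, height ≤ n → labels n = 0
  fin_supp : (Function.support labels).Finite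

namespace DL

variable {q d : ℕ}

/-- `v` is a child of `u` (one step further from the distinguished end). -/
abbrev treeAdjUp (u v : TreeVert q) : Prop :=
  v.height = u.height + 1 ∧ ∀ n, n ≠ u.height → v.labels n = u.labels n

/-- The (q+1)-regular tree. -/
def TreeGraph (q : ℕ) : SimpleGraph (TreeVert q) where
  Adj u v := treeAdjUp u v ∨ treeAdjUp v u
  symm := ⟨fun u v h => Or.symm h⟩
  loopless := by
    refine ⟨?_⟩
    intro u h
    rcases h with ⟨h1, _⟩ | ⟨h1, _⟩ <;> omega

/-- The base vertex of the tree. -/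
def treeOrigin (q : ℕ) : TreeVert q :=
  ⟨0, fun _ => 0, fun _ => Or.inl rfl, fun _ _ => rfl, by simp⟩

/-- Vertices of the Diestel–Leader graph `DL_d(q)`:
`d`-tuples of tree vertices whose heights sum to zero. -/
def DLVert (d q : ℕ) : Type :=
  {x : Fin d → TreeVert q // (∑ i, (x i).height) = 0}

/-- The Diestel–Leader graph `DL_d(q)`: an edge ascends in one tree and
descends in another, all other coordinates being fixed. -/
def DLGraph (d q : ℕ) : SimpleGraph (DLVert d q) where
  Adj v w := ∃ i j : Fin d, i ≠ j ∧ treeAdjUp (v.1 i) (w.1 i) ∧ treeAdjUp (w.1 j) (v.1 j) ∧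
      ∀ k : Fin d, k ≠ i → k ≠ j → v.1 k = w.1 k
  symm := by
    refine ⟨?_⟩
    rintro v w ⟨i, j, hij, h1, h2, h3⟩
    exact ⟨j, i, hij.symm, h2, h1, fun k hk1 hk2 => (h3 k hk2 hk1).symm⟩
  loopless := by
    refine ⟨?_⟩
    rintro v ⟨i, j, hij, ⟨h1, _⟩, _⟩
    omega

/-- The base point of `DL_d(q)`. -/
def origin (d q : ℕ) : DLVert d q :=
  ⟨fun _ => treeOrigin q, by simp [treeOrigin]⟩

/-- A geodesic ray in `DL_d(q)` : an isometric embedding of `ℕ`. -/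
def IsGeodesicRay (γ : ℕ → DLVert d q) : Prop :=
  ∀ m n : ℕ, m ≤ n → (DLGraph d q).dist (γ m) (γ n) = n - m

/-- Two rays are asymptotic when they stay at uniformly bounded distance. -/
def Asymptotic (γ γ' : ℕ → DLVert d q) : Prop :=
  ∃ C : ℕ, ∀ n : ℕ, (DLGraph d q).dist (γ n) (γ' n) ≤ C

instance : TopologicalSpace (DLVert d q) := ⊥

/-- Geodesic rays emanating from the origin, with the topology of uniform
convergence on compact sets (= pointwise convergence, the vertex set being
discrete). -/
def RaySpace (d q : ℕ) : Type :=
  {γ : ℕ → DLVert d q // IsGeodesicRay γ ∧ γ 0 = origin d q}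

instance : TopologicalSpace (RaySpace d q) := by
  unfold RaySpace; infer_instance

lemma reachable_origin (γ : RaySpace d q) (n : ℕ) :
    (DLGraph d q).Reachable (origin d q) (γ.1 n) := by
  cases n with
  | zero => rw [γ.2.2]
  | succ n =>
    have h := γ.2.1 0 (n + 1) (Nat.zero_le _)
    have hne : (DLGraph d q).dist (γ.1 0) (γ.1 (n + 1)) ≠ 0 := by
      rw [h]; omega
    have := SimpleGraph.Reachable.of_dist_ne_zero hne
    rwa [γ.2.2] at this

/-- Asymptoticity as an equivalence relation on geodesic rays from the origin. -/
def asympSetoid (d q : ℕ) : Setoid (RaySpace d q) where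
  r γ γ' := Asymptotic γ.1 γ'.1
  iseqv := by
    constructor
    · intro γ
      exact ⟨0, fun n => by simp [SimpleGraph.dist_self]⟩
    · rintro γ γ' ⟨C, hC⟩
      exact ⟨C, fun n => by rw [SimpleGraph.dist_comm]; exact hC n⟩
    · rintro a b c ⟨C1, h1⟩ ⟨C2, h2⟩
      refine ⟨C1 + C2, fun n => ?_⟩
      have hab : (DLGraph d q).Reachable (a.1 n) (b.1 n) :=
        (reachable_origin a n).symm.trans (reachable_origin b n)
      have hbc : (DLGraph d q).Reachable (b.1 n) (c.1 n) :=
        (reachable_origin b n).symm.trans (reachable_origin c n)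
      obtain ⟨p, hp⟩ := hab.exists_walk_length_eq_dist
      obtain ⟨p', hp'⟩ := hbc.exists_walk_length_eq_dist
      calc (DLGraph d q).dist (a.1 n) (c.1 n) ≤ (p.append p').length :=
            SimpleGraph.dist_le _
        _ = (DLGraph d q).dist (a.1 n) (b.1 n) + (DLGraph d q).dist (b.1 n) (c.1 n) := by
            rw [SimpleGraph.Walk.length_append, hp, hp']
        _ ≤ C1 + C2 := Nat.add_le_add (h1 n) (h2 n)

/-- The visual boundary of `DL_d(q)`: asymptotic classes of geodesic rays
from the origin, with the quotient topology. -/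
def Boundary (d q : ℕ) : Type := Quotient (asympSetoid d q)

instance : TopologicalSpace (Boundary d q) := by
  unfold Boundary; infer_instance

/-- A ray in `DL_2(q)` descends for exactly `n` steps in tree `i`
(bottoming out at height `-n`), then ascends forever in tree `i`.
For `n = 0` this says the ray ascends forever in tree `i` with no turn. -/
def DescendsExactly (i : Fin 2) (n : ℕ) (γ : ℕ → DLVert 2 q) : Prop :=
  (∀ t : ℕ, t ≤ n → ((γ t).1 i).height = -(t : ℤ)) ∧
  (∀ t : ℕ, n ≤ t → ((γ t).1 i).height = (t : ℤ) - 2 * n)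

/-- The subset `C_n^i` of the boundary: classes of rays bottoming out in
tree `i` after descending exactly `n` edges. -/
def Cset (q : ℕ) (i : Fin 2) (n : ℕ) : Set (Boundary 2 q) :=
  {x | ∃ γ : RaySpace 2 q, Quotient.mk (asympSetoid 2 q) γ = x ∧ DescendsExactly i n γ.1}

/-- Projection of a path in `DL_d(q)` to the `i`-th tree. -/
def proj (i : Fin d) (γ : ℕ → DLVert d q) : ℕ → TreeVert q := fun n => (γ n).1 i

/-- Two (lazy) paths in the tree converge to the same end: both eventually
leave every ball, and they come within a uniformly bounded distance of each
other at arbitrarily late times. -/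
def SameEnd (a b : ℕ → TreeVert q) : Prop :=
  (∀ R : ℕ, ∃ N : ℕ, ∀ n, N ≤ n → R ≤ (TreeGraph q).dist (a 0) (a n)) ∧
  (∀ R : ℕ, ∃ N : ℕ, ∀ n, N ≤ n → R ≤ (TreeGraph q).dist (b 0) (b n)) ∧
  (∃ C : ℕ, ∀ N : ℕ, ∃ m n, N ≤ m ∧ N ≤ n ∧ (TreeGraph q).dist (a m) (b n) ≤ C)

/-- The step from `p m` to `p (m+1)` descends in tree `i`. -/
def StepDown (i : Fin d) (p : ℕ → DLVert d q) (m : ℕ) : Prop :=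
  treeAdjUp ((p (m + 1)).1 i) ((p m).1 i)

/-- The step from `p m` to `p (m+1)` ascends in tree `i`. -/
def StepUp (i : Fin d) (p : ℕ → DLVert d q) (m : ℕ) : Prop :=
  treeAdjUp ((p m).1 i) ((p (m + 1)).1 i)

/-- A turn in tree `i`: a subpath beginning with a descent in `T_i` at step `t`,
ending with an ascent in `T_i` at step `s`, with no intervening step
involving `T_i`. -/
def IsTurn (i : Fin d) (p : ℕ → DLVert d q) (t s : ℕ) : Prop :=
  t < s ∧ StepDown i p t ∧ StepUp i p s ∧
    ∀ m, t < m → m < s → (p (m + 1)).1 i = (p m).1 i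

/-!
Write `h_i` for the height in `T_i`; along an edge of `DL_2(q)` it changes by `±1`, and
`h_0 + h_1 = 0`. A vertex with `p ≤ h_i ≤ r` (where `p ≤ 0 ≤ r`) whose labels vanish below level `p`
in `T_i` and below level `-r` in the other tree is reached from the origin in `2 (r - p) - |h_i|`
steps. Hence a geodesic ray that stays in the band `p ≤ h_i ≤ r` up to time `T` satisfies
`T + |h_i(γ T)| ≤ 2 (r - p)`. A ray that descends `n ≥ 1` steps in `T_i` and then turns keeps this
budget exhausted for the band it has swept, and stepping down again would sooner or later overdraw
it, so it ascends in `T_i` forever. Thus descending exactly `n` steps in `T_i` is decided by the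
first `n + 2` points of a ray, an open condition, and every ray descends exactly `m` steps in some
tree. Rays with different such profiles are not asymptotic: if they bottom out in different trees
their heights diverge, and if they bottom out in the same tree at depths `a < b`, the deeper one
carries a nonzero label at level `-b` that the other never has, and changing that label costs a
detour down to level `-b`.
-/

instance : DiscreteTopology (DLVert d q) := ⟨rfl⟩

@[ext]
theorem _root_.TreeVert.ext {x y : TreeVert q} (height : x.height = y.height)
    (labels : x.labels = y.labels) : x = y := by
  cases x; cases y; subst height labels; rfl

/-- `x.atHeight k` is the vertex at height `k` on the line from the distinguished end through `x`,
continued below `x` by the label `0`: an ancestor of `x` if `k ≤ x.height`, a descendant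
otherwise. -/
def _root_.TreeVert.atHeight (x : TreeVert q) (k : ℤ) : TreeVert q where
  height := k
  labels ℓ := if ℓ < k then x.labels ℓ else 0
  labels_lt ℓ := by
    split_ifs
    · exact x.labels_lt ℓ
    · exact Or.inl rfl
  supp_below _ hℓ := if_neg hℓ.not_gt
  fin_supp := x.fin_supp.subset fun ℓ hℓ => by
    simp only [Function.mem_support, ne_eq, ite_eq_right_iff, Classical.not_imp] at hℓ ⊢
    exact hℓ.2

@[simp]
theorem _root_.TreeVert.atHeight_height (x : TreeVert q) (k : ℤ) : (x.atHeight k).height = k :=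
  rfl

theorem _root_.TreeVert.atHeight_labels (x : TreeVert q) (k ℓ : ℤ) :
    (x.atHeight k).labels ℓ = if ℓ < k then x.labels ℓ else 0 :=
  rfl

theorem _root_.TreeVert.atHeight_self (x : TreeVert q) : x.atHeight x.height = x := by
  ext ℓ
  · rfl
  · rw [x.atHeight_labels]
    split_ifs with h
    · rfl
    · exact (x.supp_below ℓ (not_lt.1 h)).symm

theorem _root_.TreeVert.atHeight_atHeight (x : TreeVert q) {a b : ℤ} (hba : b ≤ a) :
    (x.atHeight a).atHeight b = x.atHeight b := by
  ext ℓ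
  · rfl
  · simp only [TreeVert.atHeight_labels]
    split_ifs <;> first | rfl | omega

theorem _root_.TreeVert.atHeight_congr {x y : TreeVert q} {k : ℤ}
    (h : ∀ ℓ < k, x.labels ℓ = y.labels ℓ) : x.atHeight k = y.atHeight k := by
  ext ℓ
  · rfl
  · simp only [TreeVert.atHeight_labels]
    split_ifs with hℓ
    · exact h ℓ hℓ
    · rfl

def _root_.TreeVert.IsAncestor (x y : TreeVert q) : Prop :=
  x.height ≤ y.height ∧ y.atHeight x.height = x

theorem _root_.TreeVert.IsAncestor.refl (x : TreeVert q) : x.IsAncestor x :=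
  ⟨le_rfl, x.atHeight_self⟩

theorem _root_.TreeVert.isAncestor_atHeight (x : TreeVert q) {k : ℤ} (hk : k ≤ x.height) :
    (x.atHeight k).IsAncestor x :=
  ⟨hk, rfl⟩

theorem _root_.TreeVert.atHeight_isAncestor_atHeight (x : TreeVert q) {a b : ℤ} (hba : b ≤ a) :
    (x.atHeight b).IsAncestor (x.atHeight a) :=
  ⟨hba, x.atHeight_atHeight hba⟩

theorem _root_.TreeVert.IsAncestor.atHeight {x y : TreeVert q} (h : x.IsAncestor y) {k : ℤ}
    (hk : x.height ≤ k) : x.IsAncestor (y.atHeight k) :=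
  ⟨hk, (y.atHeight_atHeight hk).trans h.2⟩

theorem _root_.TreeVert.IsAncestor.eq {x y : TreeVert q} (h : x.IsAncestor y)
    (hxy : x.height = y.height) : x = y := by
  rw [← h.2, hxy, y.atHeight_self]

theorem _root_.TreeVert.IsAncestor.treeAdjUp {x y : TreeVert q} (h : x.IsAncestor y)
    (hxy : y.height = x.height + 1) : treeAdjUp x y := by
  refine ⟨hxy, fun ℓ hℓ => ?_⟩
  rw [← h.2, y.atHeight_labels]
  split_ifs with h'
  · rfl
  · exact y.supp_below ℓ (by omega)

theorem height_eq_of_treeGraph_adj {x y : TreeVert q} (h : (TreeGraph q).Adj x y) :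
    y.height = x.height + 1 ∨ y.height = x.height - 1 := by
  rcases h with ⟨h, -⟩ | ⟨h, -⟩ <;> omega

theorem labels_eq_of_treeGraph_adj {x y : TreeVert q} (h : (TreeGraph q).Adj x y) {ℓ : ℤ}
    (hx : ℓ < x.height) (hy : ℓ < y.height) : y.labels ℓ = x.labels ℓ := by
  rcases h with ⟨-, h⟩ | ⟨-, h⟩
  · exact h ℓ hx.ne
  · exact (h ℓ hy.ne).symm

theorem treeGraph_adj_or_eq_of_adj {v w : DLVert d q} (h : (DLGraph d q).Adj v w) (k : Fin d) :
    (TreeGraph q).Adj (v.1 k) (w.1 k) ∨ v.1 k = w.1 k := by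
  obtain ⟨a, b, -, ha, hb, hrest⟩ := h
  by_cases hka : k = a
  · exact Or.inl (Or.inl (hka ▸ ha))
  by_cases hkb : k = b
  · exact Or.inl (Or.inr (hkb ▸ hb))
  exact Or.inr (hrest k hka hkb)

theorem abs_height_sub_le_of_adj {v w : DLVert d q} (h : (DLGraph d q).Adj v w) (k : Fin d) :
    |(w.1 k).height - (v.1 k).height| ≤ 1 := by
  rcases treeGraph_adj_or_eq_of_adj h k with h | h
  · rcases height_eq_of_treeGraph_adj h with h | h <;> rw [h, abs_le] <;> omega
  · simp [h]

theorem labels_eq_of_adj {v w : DLVert d q} (h : (DLGraph d q).Adj v w) (k : Fin d) {ℓ : ℤ}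
    (hv : ℓ < (v.1 k).height) (hw : ℓ < (w.1 k).height) : (w.1 k).labels ℓ = (v.1 k).labels ℓ := by
  rcases treeGraph_adj_or_eq_of_adj h k with h | h
  · exact labels_eq_of_treeGraph_adj h hv hw
  · rw [h]

theorem abs_height_sub_le_length {u v : DLVert d q} (p : (DLGraph d q).Walk u v) (k : Fin d) :
    |(v.1 k).height - (u.1 k).height| ≤ p.length := by
  induction p with
  | nil => simp
  | @cons a b c h p ih =>
    have := abs_height_sub_le_of_adj h k
    have := abs_sub_le ((c.1 k).height) ((b.1 k).height) ((a.1 k).height)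
    rw [SimpleGraph.Walk.length_cons, Nat.cast_succ]
    linarith

theorem abs_height_sub_le_dist {u v : DLVert d q} (huv : (DLGraph d q).Reachable u v) (k : Fin d) :
    |(v.1 k).height - (u.1 k).height| ≤ (DLGraph d q).dist u v := by
  obtain ⟨p, hp⟩ := huv.exists_walk_length_eq_dist
  exact hp ▸ abs_height_sub_le_length p k

/-- Labels at level `ℓ` only change at vertices of height at most `ℓ`. -/
theorem exists_mem_support_height_le {u v : DLVert d q} (p : (DLGraph d q).Walk u v) (k : Fin d)
    {ℓ : ℤ} (hne : (u.1 k).labels ℓ ≠ (v.1 k).labels ℓ) :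
    ∃ x ∈ p.support, (x.1 k).height ≤ ℓ := by
  induction p with
  | nil => exact absurd rfl hne
  | @cons a b c h p ih =>
    by_cases ha : (a.1 k).height ≤ ℓ
    · exact ⟨a, p.support.mem_cons_self, ha⟩
    by_cases hb : (b.1 k).height ≤ ℓ
    · exact ⟨b, List.mem_cons_of_mem _ p.start_mem_support, hb⟩
    obtain ⟨x, hx, hxℓ⟩ := ih (by rwa [labels_eq_of_adj h k (not_le.1 ha) (not_le.1 hb)])
    exact ⟨x, List.mem_cons_of_mem _ hx, hxℓ⟩

theorem sub_add_sub_le_dist_of_labels_ne {u v : DLVert d q} (huv : (DLGraph d q).Reachable u v)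
    (k : Fin d) {ℓ : ℤ} (hne : (u.1 k).labels ℓ ≠ (v.1 k).labels ℓ) :
    ((u.1 k).height - ℓ) + ((v.1 k).height - ℓ) ≤ (DLGraph d q).dist u v := by
  classical
  obtain ⟨p, hp⟩ := huv.exists_walk_length_eq_dist
  obtain ⟨x, hx, hxℓ⟩ := exists_mem_support_height_le p k hne
  have h₁ := le_abs_self ((u.1 k).height - (x.1 k).height)
  have h₂ := le_abs_self ((v.1 k).height - (x.1 k).height)
  rw [abs_sub_comm] at h₁
  have hlen := congrArg SimpleGraph.Walk.length (p.take_spec hx)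
  rw [SimpleGraph.Walk.length_append, hp] at hlen
  have := abs_height_sub_le_length (p.takeUntil x hx) k
  have := abs_height_sub_le_length (p.dropUntil x hx) k
  omega

theorem RaySpace.adj_succ (γ : RaySpace d q) (t : ℕ) : (DLGraph d q).Adj (γ.1 t) (γ.1 (t + 1)) := by
  rw [← SimpleGraph.dist_eq_one_iff_adj, γ.2.1 t (t + 1) t.le_succ]
  omega

theorem RaySpace.dist_origin (γ : RaySpace d q) (t : ℕ) :
    (DLGraph d q).dist (origin d q) (γ.1 t) = t := by
  have h := γ.2.1 0 t t.zero_le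
  rwa [γ.2.2, Nat.sub_zero] at h

theorem RaySpace.labels_eq_of_lt_height (γ : RaySpace d q) (k : Fin d) {ℓ : ℤ} {s t : ℕ}
    (hst : s ≤ t) (hℓ : ∀ u, s ≤ u → u ≤ t → ℓ < ((γ.1 u).1 k).height) :
    ((γ.1 t).1 k).labels ℓ = ((γ.1 s).1 k).labels ℓ := by
  induction t, hst using Nat.le_induction with
  | base => rfl
  | succ t hst ih =>
    rw [labels_eq_of_adj (γ.adj_succ t) k (hℓ t hst t.le_succ) (hℓ (t + 1) (by omega) le_rfl)]
    exact ih fun u hu hut => hℓ u hu (hut.trans t.le_succ)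

theorem RaySpace.labels_eq_zero_of_lt_height (γ : RaySpace d q) (k : Fin d) {ℓ : ℤ} {t : ℕ}
    (hℓ : ∀ u ≤ t, ℓ < ((γ.1 u).1 k).height) : ((γ.1 t).1 k).labels ℓ = 0 := by
  rw [γ.labels_eq_of_lt_height k t.zero_le fun u _ hu => hℓ u hu, γ.2.2]
  rfl

theorem RaySpace.continuous_eval (t : ℕ) : Continuous fun γ : RaySpace d q => γ.1 t :=
  (continuous_apply t).comp continuous_subtype_val

theorem RaySpace.isOpen_setOf_forall_le (N : ℕ) (P : ℕ → DLVert d q → Prop) :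
    IsOpen {γ : RaySpace d q | ∀ t ≤ N, P t (γ.1 t)} := by
  simp only [Set.ofPred_forall]
  exact (Set.finite_Iic N).isOpen_biInter fun t _ =>
    (isOpen_discrete _).preimage (RaySpace.continuous_eval t)

theorem fin_two_eq_or_eq_rev (i k : Fin 2) : k = i ∨ k = i.rev := by
  fin_cases i <;> fin_cases k <;> decide

theorem height_rev (v : DLVert 2 q) (i : Fin 2) : (v.1 i.rev).height = -(v.1 i).height := by
  have hv : (v.1 0).height + (v.1 1).height = 0 := by simpa [Fin.sum_univ_two] using v.2
  fin_cases i
  · exact eq_neg_of_add_eq_zero_right hv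
  · exact eq_neg_of_add_eq_zero_left hv

theorem DLVert.exists_apply_eq (i : Fin 2) (x y : TreeVert q) (hxy : x.height + y.height = 0) :
    ∃ v : DLVert 2 q, v.1 i = x ∧ v.1 i.rev = y := by
  refine ⟨⟨fun k => if k = i then x else y, ?_⟩, if_pos rfl, if_neg (by fin_cases i <;> decide)⟩
  fin_cases i <;> simpa [Fin.sum_univ_two, add_comm] using hxy

theorem DLVert.ext₂ (i : Fin 2) {v w : DLVert 2 q} (hi : v.1 i = w.1 i)
    (hrev : v.1 i.rev = w.1 i.rev) : v = w := by
  refine Subtype.ext (funext fun k => ?_)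
  rcases fin_two_eq_or_eq_rev i k with rfl | rfl
  exacts [hi, hrev]

theorem adj_of_treeAdjUp (i : Fin 2) {v w : DLVert 2 q} (hi : treeAdjUp (w.1 i) (v.1 i))
    (hrev : treeAdjUp (v.1 i.rev) (w.1 i.rev)) : (DLGraph 2 q).Adj v w := by
  refine ⟨i.rev, i, by fin_cases i <;> decide, hrev, hi, fun k hk hk' => ?_⟩
  rcases fin_two_eq_or_eq_rev i k with rfl | rfl
  exacts [absurd rfl hk', absurd rfl hk]

theorem height_eq_of_adj {v w : DLVert 2 q} (h : (DLGraph 2 q).Adj v w) (i : Fin 2) :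
    (w.1 i).height = (v.1 i).height + 1 ∨ (w.1 i).height = (v.1 i).height - 1 := by
  obtain ⟨a, b, hab, ha, hb, -⟩ := h
  have : i = a ∨ i = b := by fin_cases a <;> fin_cases b <;> fin_cases i <;> simp_all
  rcases this with rfl | rfl
  · exact Or.inl ha.1
  · exact Or.inr (by omega)

theorem exists_walk_of_isAncestor (i : Fin 2) {v w : DLVert 2 q}
    (hi : (w.1 i).IsAncestor (v.1 i)) (hrev : (v.1 i.rev).IsAncestor (w.1 i.rev)) :
    ∃ p : (DLGraph 2 q).Walk v w, (p.length : ℤ) = (v.1 i).height - (w.1 i).height := by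
  obtain ⟨k, hk⟩ : ∃ k : ℕ, (k : ℤ) = (v.1 i).height - (w.1 i).height :=
    ⟨_, Int.toNat_of_nonneg (sub_nonneg.2 hi.1)⟩
  induction k generalizing w with
  | zero =>
    have hvw : v = w := DLVert.ext₂ i (hi.eq (by omega)).symm
      (hrev.eq (by rw [height_rev, height_rev]; omega))
    subst hvw
    exact ⟨.nil, by simp⟩
  | succ k ih =>
    have hsum : (w.1 i).height + 1 + ((w.1 i.rev).height - 1) = 0 := by
      rw [height_rev]; ring
    obtain ⟨u, hui, hurev⟩ := DLVert.exists_apply_eq i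
      ((v.1 i).atHeight ((w.1 i).height + 1)) ((w.1 i.rev).atHeight ((w.1 i.rev).height - 1)) hsum
    push_cast at hk
    have hvu : (v.1 i.rev).height ≤ (w.1 i.rev).height - 1 := by
      rw [height_rev, height_rev]; omega
    obtain ⟨p, hp⟩ := ih (w := u)
      (hui ▸ (v.1 i).isAncestor_atHeight (by omega)) (hurev ▸ hrev.atHeight hvu)
      (by rw [hui, TreeVert.atHeight_height]; omega)
    have hwu : (w.1 i).IsAncestor (u.1 i) := hui ▸ hi.atHeight (by omega)
    have huw : (u.1 i.rev).IsAncestor (w.1 i.rev) :=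
      hurev ▸ (w.1 i.rev).isAncestor_atHeight (by omega)
    refine ⟨p.concat (adj_of_treeAdjUp i (hwu.treeAdjUp (by simp [hui]))
      (huw.treeAdjUp (by simp [hurev]))), ?_⟩
    rw [SimpleGraph.Walk.length_concat, Nat.cast_succ, hp, hui, TreeVert.atHeight_height]
    ring

theorem dist_origin_add_height_le (z : DLVert 2 q) (i : Fin 2) {p r : ℤ} (hp : p ≤ 0)
    (hz : 0 ≤ (z.1 i).height) (hzr : (z.1 i).height ≤ r)
    (hi : ∀ ℓ < p, (z.1 i).labels ℓ = 0) (hrev : ∀ ℓ < -r, (z.1 i.rev).labels ℓ = 0) :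
    ((DLGraph 2 q).dist (origin 2 q) z : ℤ) + (z.1 i).height ≤ 2 * (r - p) := by
  have hzi : (z.1 i).atHeight p = (treeOrigin q).atHeight p := TreeVert.atHeight_congr hi
  have hzrev : (z.1 i.rev).atHeight (-r) = (treeOrigin q).atHeight (-r) :=
    TreeVert.atHeight_congr hrev
  obtain ⟨w₁, hw₁i, hw₁rev⟩ := DLVert.exists_apply_eq i
    ((treeOrigin q).atHeight p) ((treeOrigin q).atHeight (-p)) (by simp)
  obtain ⟨w₂, hw₂i, hw₂rev⟩ := DLVert.exists_apply_eq i
    ((z.1 i).atHeight r) ((treeOrigin q).atHeight (-r)) (by simp)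
  -- descend to level `p` in `T_i`, climb to level `r` copying the labels of `z`, descend to `z`
  obtain ⟨p₁, hp₁⟩ := exists_walk_of_isAncestor i (v := origin 2 q) (w := w₁)
    (hw₁i ▸ (treeOrigin q).isAncestor_atHeight hp)
    (hw₁rev ▸ (TreeVert.IsAncestor.refl (treeOrigin q)).atHeight (show (0 : ℤ) ≤ -p by omega))
  obtain ⟨p₂, hp₂⟩ := exists_walk_of_isAncestor i.rev (v := w₁) (w := w₂)
    (hw₁rev ▸ hw₂rev ▸ (treeOrigin q).atHeight_isAncestor_atHeight (by omega))
    (by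
      rw [Fin.rev_rev, hw₁i, hw₂i, ← hzi]
      exact (z.1 i).atHeight_isAncestor_atHeight (by omega))
  obtain ⟨p₃, hp₃⟩ := exists_walk_of_isAncestor i (v := w₂) (w := z)
    (hw₂i ▸ (TreeVert.IsAncestor.refl _).atHeight hzr)
    (by
      rw [hw₂rev, ← hzrev]
      exact (z.1 i.rev).isAncestor_atHeight (by rw [height_rev]; omega))
  have hdist := SimpleGraph.dist_le (p₁.append (p₂.append p₃))
  simp only [SimpleGraph.Walk.length_append] at hdist
  rw [hw₁i, TreeVert.atHeight_height] at hp₁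
  rw [hw₁rev, hw₂rev, TreeVert.atHeight_height, TreeVert.atHeight_height] at hp₂
  rw [hw₂i, TreeVert.atHeight_height] at hp₃
  change (p₁.length : ℤ) = 0 - p at hp₁
  omega

theorem dist_origin_add_abs_height_le (z : DLVert 2 q) (i : Fin 2) {p r : ℤ} (hp : p ≤ 0)
    (hr : 0 ≤ r) (hpz : p ≤ (z.1 i).height) (hzr : (z.1 i).height ≤ r)
    (hi : ∀ ℓ < p, (z.1 i).labels ℓ = 0) (hrev : ∀ ℓ < -r, (z.1 i.rev).labels ℓ = 0) :
    ((DLGraph 2 q).dist (origin 2 q) z : ℤ) + |(z.1 i).height| ≤ 2 * (r - p) := by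
  rcases le_total 0 (z.1 i).height with hz | hz
  · rw [abs_of_nonneg hz]
    exact dist_origin_add_height_le z i hp hz hzr hi hrev
  · have := dist_origin_add_height_le z i.rev (p := -r) (r := -p) (by omega)
      (by rw [height_rev]; omega) (by rw [height_rev]; omega) hrev
      (by rw [Fin.rev_rev, neg_neg]; exact hi)
    rw [height_rev] at this
    rw [abs_of_nonpos hz]
    omega

theorem forall_eq_neg_or_exists_turn {f : ℕ → ℤ} (h0 : f 0 = 0)
    (hf : ∀ t, f (t + 1) = f t + 1 ∨ f (t + 1) = f t - 1) :
    (∀ t, f t = -t) ∨ ∃ m, (∀ t ≤ m, f t = -t) ∧ f (m + 1) = -m + 1 := by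
  by_cases hturn : ∃ m, (∀ t ≤ m, f t = -t) ∧ f (m + 1) = -m + 1
  · exact Or.inr hturn
  push Not at hturn
  suffices h : ∀ s, ∀ t ≤ s, f t = -t from Or.inl fun t => h t t le_rfl
  intro s
  induction s with
  | zero => intro t ht; simp [Nat.le_zero.1 ht, h0]
  | succ s ih =>
    intro t ht
    obtain ht | rfl := Nat.le_add_one_iff.1 ht
    · exact ih t ht
    · have := hturn s ih
      have := ih s le_rfl
      rcases hf s with h | h <;> push_cast <;> omega

theorem RaySpace.height_zero (γ : RaySpace d q) (k : Fin d) : ((γ.1 0).1 k).height = 0 := by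
  rw [γ.2.2]; rfl

theorem RaySpace.height_succ (γ : RaySpace 2 q) (i : Fin 2) (t : ℕ) :
    ((γ.1 (t + 1)).1 i).height = ((γ.1 t).1 i).height + 1 ∨
      ((γ.1 (t + 1)).1 i).height = ((γ.1 t).1 i).height - 1 :=
  height_eq_of_adj (γ.adj_succ t) i

theorem RaySpace.add_abs_height_le (γ : RaySpace 2 q) (i : Fin 2) {p r : ℤ} (hp : p ≤ 0)
    (hr : 0 ≤ r) {T : ℕ} (hT : ∀ u ≤ T, ((γ.1 u).1 i).height ∈ Set.Icc p r) :
    (T : ℤ) + |((γ.1 T).1 i).height| ≤ 2 * (r - p) := by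
  have := dist_origin_add_abs_height_le (γ.1 T) i hp hr (hT T le_rfl).1 (hT T le_rfl).2
    (fun ℓ hℓ => γ.labels_eq_zero_of_lt_height i fun u hu => hℓ.trans_le (hT u hu).1)
    (fun ℓ hℓ => γ.labels_eq_zero_of_lt_height i.rev fun u hu => by
      rw [height_rev]; linarith [(hT u hu).2])
  rwa [γ.dist_origin] at this

theorem RaySpace.abs_height_succ_add_one_eq_of_tight (γ : RaySpace 2 q) (i : Fin 2) {p r : ℤ}
    (hp : p < 0) (hr : 0 < r) {s : ℕ} (hs : ∀ u ≤ s, ((γ.1 u).1 i).height ∈ Set.Icc p r)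
    (htight : (s : ℤ) + |((γ.1 s).1 i).height| = 2 * (r - p))
    (hin : ((γ.1 (s + 1)).1 i).height ∈ Set.Icc p r) :
    |((γ.1 (s + 1)).1 i).height| + 1 = |((γ.1 s).1 i).height| ∧
      ((γ.1 (s + 1)).1 i).height ∈ Set.Ioo p r := by
  have hbudget := γ.add_abs_height_le i hp.le hr.le (T := s + 1) fun u hu =>
    (Nat.le_add_one_iff.1 hu).elim (hs u) fun h => h ▸ hin
  have hband := hs s le_rfl
  simp only [Set.mem_Icc, Set.mem_Ioo] at hband hin ⊢
  push_cast at hbudget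
  rcases γ.height_succ i s with h | h <;> rw [h] at hbudget hin ⊢ <;>
    rcases abs_cases ((γ.1 s).1 i).height with ⟨h₁, h₁'⟩ | ⟨h₁, h₁'⟩ <;>
    rcases abs_cases (((γ.1 s).1 i).height + 1) with ⟨h₂, h₂'⟩ | ⟨h₂, h₂'⟩ <;>
    rcases abs_cases (((γ.1 s).1 i).height - 1) with ⟨h₃, h₃'⟩ | ⟨h₃, h₃'⟩ <;> omega

/-- The budget `s + |h_i(γ s)| ≤ 2 (r - p)` of a ray kept in the band `[p, r]` can only stay
exhausted while the ray steps towards height `0`, and at height `0` every step overdraws it. -/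
theorem RaySpace.height_succ_not_mem_Icc (γ : RaySpace 2 q) (i : Fin 2) {p r : ℤ} (hp : p < 0)
    (hr : 0 < r) {s : ℕ} (hs : ∀ u ≤ s, ((γ.1 u).1 i).height ∈ Set.Icc p r)
    (htight : (s : ℤ) + |((γ.1 s).1 i).height| = 2 * (r - p)) :
    ((γ.1 (s + 1)).1 i).height ∉ Set.Icc p r := by
  obtain ⟨k, hk⟩ : ∃ k : ℕ, |((γ.1 s).1 i).height| = k := ⟨_, Int.abs_eq_natAbs _⟩
  induction k generalizing s with
  | zero =>
    intro hin
    have := (γ.abs_height_succ_add_one_eq_of_tight i hp hr hs htight hin).1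
    have := abs_nonneg ((γ.1 (s + 1)).1 i).height
    omega
  | succ k ih =>
    intro hin
    obtain ⟨habs, hlo, hhi⟩ := γ.abs_height_succ_add_one_eq_of_tight i hp hr hs htight hin
    refine ih (fun u hu => (Nat.le_add_one_iff.1 hu).elim (hs u) fun h => h ▸ hin)
      (by push_cast; omega) (by omega) ?_
    rcases γ.height_succ i (s + 1) with h | h <;> rw [h] <;> constructor <;> omega

theorem RaySpace.descendsExactly_of_turn (γ : RaySpace 2 q) (i : Fin 2) {n : ℕ} (hn : 0 < n)
    (hdesc : ∀ t ≤ n, ((γ.1 t).1 i).height = -t)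
    (hturn : ((γ.1 (n + 1)).1 i).height = -n + 1) : DescendsExactly i n γ.1 := by
  suffices h : ∀ s, n ≤ s → ∀ u, n ≤ u → u ≤ s → ((γ.1 u).1 i).height = u - 2 * n from
    ⟨hdesc, fun t ht => h t ht t ht le_rfl⟩
  intro s hs
  induction s, hs using Nat.le_induction with
  | base => intro u hu hu'; rw [le_antisymm hu' hu, hdesc n le_rfl]; ring
  | succ s hns ih =>
    intro u hu hu'
    obtain hu' | rfl := Nat.le_add_one_iff.1 hu'
    · exact ih u hu hu'
    obtain rfl | hns := hns.eq_or_lt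
    · rw [hturn]; push_cast; ring
    have hs := ih s hns.le le_rfl
    have hband : ∀ r : ℤ, 0 ≤ r → (s : ℤ) - 2 * n ≤ r →
        ∀ u ≤ s, ((γ.1 u).1 i).height ∈ Set.Icc (-n : ℤ) r := by
      intro r hr hsr u hu
      rcases le_total u n with hun | hnu
      · rw [hdesc u hun]; constructor <;> omega
      · rw [ih u hnu hu]; constructor <;> omega
    rcases γ.height_succ i s with hup | hdown
    · rw [hup, hs]; push_cast; ring
    exfalso
    rcases le_or_gt (s : ℤ) (2 * n) with hle | hlt
    · have := γ.add_abs_height_le i (p := -n) (r := 0) (by omega) le_rfl (T := s + 1) fun u hu =>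
        (Nat.le_add_one_iff.1 hu).elim (hband 0 le_rfl (by omega) u) fun h => by
          rw [h, hdown, hs]; constructor <;> omega
      rw [hdown, hs, abs_of_nonpos (by omega)] at this
      push_cast at this
      omega
    · exact γ.height_succ_not_mem_Icc i (p := -n) (r := s - 2 * n) (by omega) (by omega)
        (hband _ (by omega) le_rfl) (by rw [hs, abs_of_pos (by omega)]; ring)
        (by rw [hdown, hs]; constructor <;> omega)

theorem RaySpace.exists_descendsExactly_or_height_one (γ : RaySpace 2 q) (i : Fin 2) :
    (∃ j m, DescendsExactly j m γ.1) ∨ ((γ.1 1).1 i).height = 1 := by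
  rcases forall_eq_neg_or_exists_turn (f := fun t => ((γ.1 t).1 i).height) (γ.height_zero i)
    (γ.height_succ i) with hall | ⟨m, hdesc, hturn⟩
  · refine Or.inl ⟨i.rev, 0, fun t ht => ?_, fun t _ => ?_⟩ <;>
      simp only [height_rev, hall, Nat.cast_zero, mul_zero, sub_zero, neg_neg]
    simp [Nat.le_zero.1 ht]
  · rcases Nat.eq_zero_or_pos m with rfl | hm
    · exact Or.inr (by simpa using hturn)
    · exact Or.inl ⟨i, m, γ.descendsExactly_of_turn i hm hdesc hturn⟩

theorem RaySpace.exists_descendsExactly (γ : RaySpace 2 q) : ∃ j m, DescendsExactly j m γ.1 := by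
  rcases γ.exists_descendsExactly_or_height_one 0 with h | h₀
  · exact h
  rcases γ.exists_descendsExactly_or_height_one 1 with h | h₁
  · exact h
  have : ((γ.1 1).1 1).height = -((γ.1 1).1 0).height := height_rev (γ.1 1) 0
  omega

theorem DescendsExactly.neg_le_height {γ : ℕ → DLVert 2 q} {i : Fin 2} {n : ℕ}
    (hγ : DescendsExactly i n γ) (t : ℕ) : -(n : ℤ) ≤ ((γ t).1 i).height := by
  rcases le_total t n with ht | ht
  · rw [hγ.1 t ht]; omega
  · rw [hγ.2 t ht]; omega

/-- At the bottom of its descent the ray turns into a new branch: otherwise the point reached one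
step later would lie in a band of width `n - 1` and be too close to the origin. -/
theorem labels_ne_zero_of_descendsExactly {γ : RaySpace 2 q} {i : Fin 2} {n : ℕ} (hn : 0 < n)
    (hγ : DescendsExactly i n γ.1) : ((γ.1 (n + 1)).1 i).labels (-n) ≠ 0 := by
  intro h0
  have hturn : ((γ.1 (n + 1)).1 i).height = -n + 1 := by
    rw [hγ.2 (n + 1) (by omega)]; push_cast; ring
  have hle : ∀ u ≤ n + 1, ((γ.1 u).1 i).height ≤ 0 := fun u hu => by
    obtain hu | rfl := Nat.le_add_one_iff.1 hu
    · rw [hγ.1 u hu]; omega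
    · omega
  have := dist_origin_add_abs_height_le (γ.1 (n + 1)) i (p := -n + 1) (r := 0) (by omega) le_rfl
    hturn.ge (hle _ le_rfl)
    (fun ℓ hℓ => (eq_or_lt_of_le (Int.lt_add_one_iff.1 hℓ)).elim (· ▸ h0) fun hℓ =>
      γ.labels_eq_zero_of_lt_height i fun u _ => hℓ.trans_le (hγ.neg_le_height u))
    (fun ℓ hℓ => γ.labels_eq_zero_of_lt_height i.rev fun u hu => by
      rw [height_rev]; linarith [hle u hu])
  rw [γ.dist_origin, hturn, abs_of_nonpos (by omega)] at this
  push_cast at this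
  omega

theorem not_asymptotic_of_descendsExactly_lt {α β : RaySpace 2 q} {i : Fin 2} {a b : ℕ}
    (hab : a < b) (hα : DescendsExactly i a α.1) (hβ : DescendsExactly i b β.1) :
    ¬ Asymptotic α.1 β.1 := by
  rintro ⟨C, hC⟩
  set t := a + b + C + 1
  have hαt : ((α.1 t).1 i).labels (-b) = 0 :=
    α.labels_eq_zero_of_lt_height i fun u _ => by have := hα.neg_le_height u; omega
  have hβt : ((β.1 t).1 i).labels (-b) ≠ 0 := by
    rw [β.labels_eq_of_lt_height i (s := b + 1) (by omega) fun u hu _ => by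
      rw [hβ.2 u (by omega)]; omega]
    exact labels_ne_zero_of_descendsExactly (by omega) hβ
  have := sub_add_sub_le_dist_of_labels_ne
    ((reachable_origin α t).symm.trans (reachable_origin β t)) i (hαt.trans_ne hβt.symm)
  rw [hα.2 t (by omega), hβ.2 t (by omega)] at this
  have := hC t
  omega

theorem not_asymptotic_of_descendsExactly_rev {α β : RaySpace 2 q} {i : Fin 2} {a b : ℕ}
    (hα : DescendsExactly i.rev a α.1) (hβ : DescendsExactly i b β.1) :
    ¬ Asymptotic α.1 β.1 := by
  rintro ⟨C, hC⟩
  set t := a + b + C + 1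
  have := abs_height_sub_le_dist ((reachable_origin α t).symm.trans (reachable_origin β t)) i
  have hαt : ((α.1 t).1 i.rev).height = t - 2 * a := hα.2 t (by omega)
  rw [height_rev] at hαt
  rw [hβ.2 t (by omega), abs_le] at this
  have := hC t
  omega

theorem descendsExactly_of_asymptotic {α β : RaySpace 2 q} {i : Fin 2} {n : ℕ}
    (hβ : DescendsExactly i n β.1) (hαβ : Asymptotic α.1 β.1) : DescendsExactly i n α.1 := by
  obtain ⟨j, m, hα⟩ := α.exists_descendsExactly
  rcases fin_two_eq_or_eq_rev i j with rfl | rfl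
  · rcases lt_trichotomy m n with h | rfl | h
    · exact absurd hαβ (not_asymptotic_of_descendsExactly_lt h hα hβ)
    · exact hα
    · exact absurd ((asympSetoid 2 q).iseqv.symm hαβ)
        (not_asymptotic_of_descendsExactly_lt h hβ hα)
  · exact absurd hαβ (not_asymptotic_of_descendsExactly_rev hα hβ)

theorem mk_preimage_Cset (i : Fin 2) (n : ℕ) :
    Quotient.mk (asympSetoid 2 q) ⁻¹' Cset q i n = {γ | DescendsExactly i n γ.1} := by
  ext γ
  exact ⟨fun ⟨β, hβγ, hβ⟩ =>
    descendsExactly_of_asymptotic hβ ((asympSetoid 2 q).iseqv.symm (Quotient.exact hβγ)),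
    fun hγ => ⟨γ, rfl, hγ⟩⟩

theorem isOpen_setOf_descendsExactly (i : Fin 2) {n : ℕ} (hn : 0 < n) :
    IsOpen {γ : RaySpace 2 q | DescendsExactly i n γ.1} := by
  have : {γ : RaySpace 2 q | DescendsExactly i n γ.1} =
      {γ | ∀ t ≤ n, ((γ.1 t).1 i).height = -(t : ℤ)} ∩
        (fun γ : RaySpace 2 q => γ.1 (n + 1)) ⁻¹' {v | (v.1 i).height = -n + 1} := by
    ext γ
    refine ⟨fun hγ => ⟨hγ.1, ?_⟩, fun ⟨hdesc, hturn⟩ => γ.descendsExactly_of_turn i hn hdesc hturn⟩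
    change ((γ.1 (n + 1)).1 i).height = _
    rw [hγ.2 (n + 1) (by omega)]
    push_cast; ring
  rw [this]
  exact (RaySpace.isOpen_setOf_forall_le n fun t v => (v.1 i).height = -(t : ℤ)).inter
    ((isOpen_discrete _).preimage (RaySpace.continuous_eval _))

theorem Cset_isOpen_general {q : ℕ} (i : Fin 2) (n : ℕ) (hn : 0 < n) :
    IsOpen (Cset q i n) := by
  have := isOpen_setOf_descendsExactly (q := q) i hn
  rw [← mk_preimage_Cset] at this
  exact isQuotientMap_quotient_mk'.isOpen_preimage.mp this

/-- for `n > 0`, the set `C_n^i` of classes bottoming out in tree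
`i` at depth exactly `n` is open in the visual boundary of `DL_2(q)`. -/
theorem Cset_isOpen {q : ℕ} (hq : 2 ≤ q) (i : Fin 2) (n : ℕ) (hn : 0 < n) :
    IsOpen (Cset q i n) :=
  Cset_isOpen_general i n hn

end DL
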